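/- Let P be a probability distribution on the finite product type C_1 × C_2 × A satisfying I(C_1 : C_2 | A)_P = 0, let R be a channel from A to a finite type A', and let R(P) denote the distribution on C_1 × C_2 × A' obtained by applying R to the A-component of P. Suppose there exists a channel R̂ from A' to A such that applying R̂ to the A'-component of R(P) recovers P exactly. Then I(C_1 : C_2 | A')_{R(P)} = 0. -/

import Mathlib

/-!
Write `W = (C₁, C₂)`. Since `A'` is produced from `A`, `I(W:A') ≤ I(W:A)`, and since `A` is
recovered from `A'`, also `I(W:A) ≤ I(W:A')`. Equality in this data-processing inequality for the
chain `W – A – A'` makes `W – A' – A` a Markov chain too: given `A' = a'`, the law of `W` equals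
its law given `A = a` for every `a` with `P(a) > 0` that can produce `a'`. Vanishing of
`I(C₁:C₂|A)` says that each law of `W` given `A = a` is a product, hence so is each law of `W`
given `A' = a'`.
-/

open Finset

/-- A probability distribution on a finite type: nonnegative and sums to 1. -/
def IsDist {X : Type*} [Fintype X] (p : X → ℝ) : Prop :=
  (∀ x, 0 ≤ p x) ∧ ∑ x, p x = 1

/-- A channel (stochastic map) from `A` to `A'`: each row `R a ·` is a
probability distribution on `A'`. -/
def IsChannel {A A' : Type*} [Fintype A'] (R : A → A' → ℝ) : Prop :=
  (∀ a a', 0 ≤ R a a') ∧ ∀ a, ∑ a', R a a' = 1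

/-- Shannon entropy with the natural logarithm.  The convention `0 log 0 = 0`
holds automatically since `Real.log 0 = 0`. -/
noncomputable def H {X : Type*} [Fintype X] (p : X → ℝ) : ℝ :=
  -∑ x, p x * Real.log (p x)

/-- Mutual information `I(X:Y)` of a joint distribution on `X × Y`:
`H(P_X) + H(P_Y) - H(P)`. -/
noncomputable def MI {X Y : Type*} [Fintype X] [Fintype Y] (p : X × Y → ℝ) : ℝ :=
  H (fun x => ∑ y, p (x, y)) + H (fun y => ∑ x, p (x, y)) - H p

/-- Conditional mutual information `I(X:Z|Y) = I(X:YZ) - I(X:Y)` of a joint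
distribution on `X × Y × Z` (conditioning on the *middle* variable). -/
noncomputable def CMI {X Y Z : Type*} [Fintype X] [Fintype Y] [Fintype Z]
    (p : X × Y × Z → ℝ) : ℝ :=
  MI p - MI (fun q : X × Y => ∑ z, p (q.1, q.2, z))

/-- Apply a channel `R : A → A'` to the first component of a joint
distribution on `A × B`. -/
noncomputable def applyFst {A A' B : Type*} [Fintype A]
    (R : A → A' → ℝ) (p : A × B → ℝ) : A' × B → ℝ :=
  fun q => ∑ a, R a q.1 * p (a, q.2)

/-- Apply a channel `R : A → A'` to the middle component of a joint
distribution on `BL × A × BR`. -/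
noncomputable def applyMid {BL A A' BR : Type*} [Fintype A]
    (R : A → A' → ℝ) (p : BL × A × BR → ℝ) : BL × A' × BR → ℝ :=
  fun q => ∑ a, R a q.2.1 * p (q.1, a, q.2.2)

open Real InformationTheory

lemma H_eq_sum_negMulLog {X : Type*} [Fintype X] (p : X → ℝ) : H p = ∑ x, negMulLog (p x) := by
  simp [H, negMulLog, sum_neg_distrib]

lemma mul_klFun_div_eq {t u v s : ℝ} (ht : 0 ≤ t) (hu : t ≤ u) (hv : t ≤ v) (hs : t ≤ s) :
    u * v / s * klFun (t / (u * v / s)) =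
      t * log t - t * log u - t * log v + t * log s + u * v / s - t := by
  rcases ht.eq_or_lt with rfl | ht
  · simp [klFun_zero]
  have hu := ht.trans_le hu
  have hv := ht.trans_le hv
  have hs := ht.trans_le hs
  rw [klFun_apply, log_div ht.ne' (by positivity), log_div (by positivity) hs.ne',
    log_mul hu.ne' hv.ne']
  field_simp
  ring

lemma mul_klFun_div_eq_zero_iff {t u v s : ℝ} (ht : 0 ≤ t) (htu : t ≤ u) (htv : t ≤ v)
    (hus : u ≤ s) (hvs : v ≤ s) :
    u * v / s * klFun (t / (u * v / s)) = 0 ↔ t * s = u * v := by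
  rcases (ht.trans htu).eq_or_lt with rfl | hu
  · simp [(htu.antisymm ht)]
  rcases (ht.trans htv).eq_or_lt with rfl | hv
  · simp [(htv.antisymm ht)]
  have hs := hu.trans_le hus
  have hr : 0 < u * v / s := by positivity
  rw [mul_eq_zero, klFun_eq_zero_iff (by positivity), div_eq_one_iff_eq hr.ne', eq_div_iff hs.ne']
  simp [hr.ne']

section Independence

variable {X Z : Type*}

def fstMarg [Fintype Z] (h : X × Z → ℝ) (x : X) : ℝ := ∑ z, h (x, z)

def sndMarg [Fintype X] (h : X × Z → ℝ) (z : Z) : ℝ := ∑ x, h (x, z)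

lemma le_fstMarg [Fintype Z] {h : X × Z → ℝ} (hh : 0 ≤ h) (x : X) (z : Z) :
    h (x, z) ≤ fstMarg h x :=
  Finset.single_le_sum (f := fun z => h (x, z)) (fun _ _ => hh _) (Finset.mem_univ z)

lemma le_sndMarg [Fintype X] {h : X × Z → ℝ} (hh : 0 ≤ h) (x : X) (z : Z) :
    h (x, z) ≤ sndMarg h z :=
  Finset.single_le_sum (f := fun x => h (x, z)) (fun _ _ => hh _) (Finset.mem_univ x)

variable [Fintype X] [Fintype Z]

def IsIndep (h : X × Z → ℝ) : Prop :=
  ∀ x z, h (x, z) * ∑ q, h q = fstMarg h x * sndMarg h z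

noncomputable def prodMarg (h : X × Z → ℝ) (q : X × Z) : ℝ :=
  fstMarg h q.1 * sndMarg h q.2 / ∑ q, h q

lemma MI_eq_fstMarg_sndMarg (h : X × Z → ℝ) : MI h = H (fstMarg h) + H (sndMarg h) - H h := rfl

lemma sum_fstMarg (h : X × Z → ℝ) : ∑ x, fstMarg h x = ∑ q, h q :=
  (Fintype.sum_prod_type h).symm

lemma sum_sndMarg (h : X × Z → ℝ) : ∑ z, sndMarg h z = ∑ q, h q := by
  rw [Fintype.sum_prod_type, Finset.sum_comm]
  rfl

variable {h : X × Z → ℝ}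

lemma fstMarg_le_sum (hh : 0 ≤ h) (x : X) : fstMarg h x ≤ ∑ q, h q := by
  rw [← sum_fstMarg]
  exact Finset.single_le_sum (fun x _ => Finset.sum_nonneg fun z _ => hh (x, z)) (Finset.mem_univ x)

lemma sndMarg_le_sum (hh : 0 ≤ h) (z : Z) : sndMarg h z ≤ ∑ q, h q := by
  rw [← sum_sndMarg]
  exact Finset.single_le_sum (fun z _ => Finset.sum_nonneg fun x _ => hh (x, z)) (Finset.mem_univ z)

lemma prodMarg_nonneg (hh : 0 ≤ h) (q : X × Z) : 0 ≤ prodMarg h q :=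
  div_nonneg (mul_nonneg (Finset.sum_nonneg fun _ _ => hh _) (Finset.sum_nonneg fun _ _ => hh _))
    (Finset.sum_nonneg fun _ _ => hh _)

lemma sum_prodMarg (h : X × Z → ℝ) : ∑ q, prodMarg h q = ∑ q, h q := by
  simp only [prodMarg, ← Finset.sum_div, Fintype.sum_prod_type (fun q => fstMarg h q.1 * _),
    ← Finset.sum_mul_sum, sum_fstMarg, sum_sndMarg, mul_self_div_self]

/-- The right-hand side is the relative entropy of `h` with respect to `prodMarg h`. -/
lemma MI_sub_negMulLog_sum (hh : 0 ≤ h) :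
    MI h - negMulLog (∑ q, h q) = ∑ q, prodMarg h q * klFun (h q / prodMarg h q) := by
  have hterm : ∀ q : X × Z, prodMarg h q * klFun (h q / prodMarg h q) =
      h q * log (h q) - h q * log (fstMarg h q.1) - h q * log (sndMarg h q.2)
        + h q * log (∑ q, h q) + prodMarg h q - h q := fun ⟨x, z⟩ =>
    mul_klFun_div_eq (hh _) (le_fstMarg hh x z) (le_sndMarg hh x z)
      ((le_fstMarg hh x z).trans (fstMarg_le_sum hh x))
  have hfst : ∑ q : X × Z, h q * log (fstMarg h q.1) = ∑ x, fstMarg h x * log (fstMarg h x) := by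
    simp only [Fintype.sum_prod_type, fstMarg, Finset.sum_mul]
  have hsnd : ∑ q : X × Z, h q * log (sndMarg h q.2) = ∑ z, sndMarg h z * log (sndMarg h z) := by
    rw [Fintype.sum_prod_type, Finset.sum_comm]
    simp only [sndMarg, Finset.sum_mul]
  simp only [hterm, Finset.sum_add_distrib, Finset.sum_sub_distrib, ← Finset.sum_mul, hfst, hsnd,
    sum_prodMarg, MI_eq_fstMarg_sndMarg, H, negMulLog]
  ring

lemma negMulLog_sum_le_MI (hh : 0 ≤ h) : negMulLog (∑ q, h q) ≤ MI h := by
  rw [← sub_nonneg, MI_sub_negMulLog_sum hh]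
  refine Finset.sum_nonneg fun q _ => mul_nonneg (prodMarg_nonneg hh q) (klFun_nonneg ?_)
  exact div_nonneg (hh q) (prodMarg_nonneg hh q)

lemma MI_eq_negMulLog_sum_iff (hh : 0 ≤ h) : MI h = negMulLog (∑ q, h q) ↔ IsIndep h := by
  rw [← sub_eq_zero, MI_sub_negMulLog_sum hh, Finset.sum_eq_zero_iff_of_nonneg fun q _ =>
    mul_nonneg (prodMarg_nonneg hh q) (klFun_nonneg (div_nonneg (hh q) (prodMarg_nonneg hh q)))]
  simp only [Finset.mem_univ, true_implies, Prod.forall, IsIndep]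
  refine forall₂_congr fun x z => mul_klFun_div_eq_zero_iff (hh _) (le_fstMarg hh x z)
    (le_sndMarg hh x z) (fstMarg_le_sum hh x) (sndMarg_le_sum hh z)

lemma isIndep_of_sum_eq_zero (hh : 0 ≤ h) (h0 : ∑ q, h q = 0) : IsIndep h := by
  intro x z
  have hx : fstMarg h x = 0 :=
    le_antisymm (h0 ▸ fstMarg_le_sum hh x) (Finset.sum_nonneg fun z _ => hh (x, z))
  rw [h0, hx, mul_zero, zero_mul]

lemma isIndep_mul (f : X → ℝ) (g : Z → ℝ) : IsIndep fun q => f q.1 * g q.2 := by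
  intro x z
  simp only [fstMarg, sndMarg, Fintype.sum_prod_type, ← Finset.mul_sum, ← Finset.sum_mul]
  ring

lemma IsIndep.const_mul (hind : IsIndep h) (c : ℝ) : IsIndep fun q => c * h q := by
  intro x z
  have hcx : fstMarg (fun q => c * h q) x = c * fstMarg h x := (Finset.mul_sum ..).symm
  have hcz : sndMarg (fun q => c * h q) z = c * sndMarg h z := (Finset.mul_sum ..).symm
  rw [hcx, hcz, ← Finset.mul_sum]
  linear_combination c ^ 2 * hind x z

variable {A : Type*} [Fintype A]

lemma IsIndep.sum_mul {g : A → X × Z → ℝ} {w : A → ℝ} (hg : ∀ a, 0 ≤ g a) (hw : 0 ≤ w)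
    (hind : ∀ a, IsIndep (g a)) (hcond : IsIndep fun q : (X × Z) × A => g q.2 q.1 * w q.2) :
    IsIndep fun q => ∑ a, w a * g a q := by
  set m : X × Z → ℝ := fun q => ∑ a, w a * g a q
  set k : (X × Z) × A → ℝ := fun q => g q.2 q.1 * w q.2
  have hm : 0 ≤ m := fun q => Finset.sum_nonneg fun a _ => mul_nonneg (hw a) (hg a q)
  by_cases hT : ∑ q, m q = 0
  · exact isIndep_of_sum_eq_zero hm hT
  have hfst : fstMarg k = m := funext fun q => Finset.sum_congr rfl fun a _ => mul_comm _ _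
  have hk : ∑ q, k q = ∑ q, m q := by rw [← sum_fstMarg, hfst]
  obtain ⟨a₀, -, ha₀⟩ : ∃ a ∈ Finset.univ, sndMarg k a ≠ 0 :=
    Finset.exists_ne_zero_of_sum_ne_zero (by rwa [sum_sndMarg, hk])
  -- `hcond` at `a₀`: the law of the point given `a₀` is its marginal law `m`
  have hm_eq : m = fun q => (∑ q, m q) * w a₀ / sndMarg k a₀ * g a₀ q := by
    funext q
    have h := hcond q a₀
    rw [hfst, hk] at h
    field_simp
    linear_combination -h
  rw [hm_eq]
  exact (hind a₀).const_mul _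

end Independence

section ConditionalMutualInformation

variable {X Y Z : Type*}

def sliceMid (p : X × Y × Z → ℝ) (y : Y) : X × Z → ℝ := fun q => p (q.1, y, q.2)

def swapLast (p : X × Y × Z → ℝ) : X × Z × Y → ℝ := fun q => p (q.1, q.2.2, q.2.1)

lemma sliceMid_nonneg {p : X × Y × Z → ℝ} (hp : 0 ≤ p) (y : Y) : 0 ≤ sliceMid p y :=
  fun _ => hp _

lemma swapLast_nonneg {p : X × Y × Z → ℝ} (hp : 0 ≤ p) : 0 ≤ swapLast p :=
  fun _ => hp _

variable [Fintype X] [Fintype Y] [Fintype Z]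

lemma CMI_eq_sum_sliceMid (p : X × Y × Z → ℝ) :
    CMI p = ∑ y, (MI (sliceMid p y) - negMulLog (∑ q, sliceMid p y q)) := by
  simp only [CMI, MI, H_eq_sum_negMulLog, sliceMid, Fintype.sum_prod_type, Finset.sum_sub_distrib,
    Finset.sum_add_distrib]
  rw [Finset.sum_comm (f := fun (y : Y) (x : X) => negMulLog (∑ z, p (x, y, z))),
    Finset.sum_comm (f := fun (y : Y) (x : X) => ∑ z, negMulLog (p (x, y, z)))]
  ring

lemma CMI_nonneg {p : X × Y × Z → ℝ} (hp : 0 ≤ p) : 0 ≤ CMI p := by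
  rw [CMI_eq_sum_sliceMid]
  exact Finset.sum_nonneg fun y _ => sub_nonneg.2 (negMulLog_sum_le_MI (sliceMid_nonneg hp y))

lemma CMI_eq_zero_iff {p : X × Y × Z → ℝ} (hp : 0 ≤ p) :
    CMI p = 0 ↔ ∀ y, IsIndep (sliceMid p y) := by
  rw [CMI_eq_sum_sliceMid, Finset.sum_eq_zero_iff_of_nonneg fun y _ =>
    sub_nonneg.2 (negMulLog_sum_le_MI (sliceMid_nonneg hp y))]
  simp only [Finset.mem_univ, true_implies, sub_eq_zero,
    MI_eq_negMulLog_sum_iff (sliceMid_nonneg hp _)]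

lemma H_comp_equiv {α β : Type*} [Fintype α] [Fintype β] (e : α ≃ β) (p : β → ℝ) :
    H (p ∘ e) = H p := by
  simp only [H_eq_sum_negMulLog, Function.comp_apply, Equiv.sum_comp e (fun b => negMulLog (p b))]

lemma MI_swapLast (p : X × Y × Z → ℝ) : MI (swapLast p) = MI p := by
  have hfst : (fun x => ∑ q : Z × Y, swapLast p (x, q)) = fun x => ∑ q : Y × Z, p (x, q) :=
    funext fun x => Equiv.sum_comp (Equiv.prodComm Z Y) fun q => p (x, q)
  rw [MI, MI, hfst, ← H_comp_equiv (Equiv.prodComm Z Y) (fun q : Y × Z => ∑ x, p (x, q)),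
    ← H_comp_equiv ((Equiv.refl X).prodCongr (Equiv.prodComm Z Y)) p]
  rfl

end ConditionalMutualInformation

section Channels

variable {W A B : Type*} [Fintype B]

/-- The joint law of the Markov chain `W – A – B`. -/
def compProd (p : W × A → ℝ) (K : A → B → ℝ) : W × A × B → ℝ :=
  fun q => p (q.1, q.2.1) * K q.2.1 q.2.2

lemma compProd_nonneg {p : W × A → ℝ} {K : A → B → ℝ} (hp : 0 ≤ p) (hK : IsChannel K) :
    0 ≤ compProd p K :=
  fun _ => mul_nonneg (hp _) (hK.1 _ _)

variable [Fintype A]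

noncomputable def mapSnd (K : A → B → ℝ) (p : W × A → ℝ) : W × B → ℝ :=
  fun q => ∑ a, K a q.2 * p (q.1, a)

lemma mapSnd_nonneg {K : A → B → ℝ} {p : W × A → ℝ} (hK : IsChannel K) (hp : 0 ≤ p) :
    0 ≤ mapSnd K p :=
  fun _ => Finset.sum_nonneg fun _ _ => mul_nonneg (hK.1 _ _) (hp _)

variable [Fintype W]

lemma MI_compProd {p : W × A → ℝ} {K : A → B → ℝ} (hp : 0 ≤ p) (hK : IsChannel K) :
    MI (compProd p K) = MI p := by
  have hCMI : CMI (compProd p K) = 0 :=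
    (CMI_eq_zero_iff (compProd_nonneg hp hK)).2 fun a => isIndep_mul (fun w => p (w, a)) (K a)
  have hmarg : (fun q : W × A => ∑ b, compProd p K (q.1, q.2, b)) = p :=
    funext fun q => by simp only [compProd, ← Finset.mul_sum, hK.2, mul_one]
  rw [CMI, hmarg, sub_eq_zero] at hCMI
  exact hCMI

lemma CMI_swapLast_compProd {p : W × A → ℝ} {K : A → B → ℝ} (hp : 0 ≤ p) (hK : IsChannel K) :
    CMI (swapLast (compProd p K)) = MI p - MI (mapSnd K p) := by
  have hmarg : (fun q : W × B => ∑ a, swapLast (compProd p K) (q.1, q.2, a)) = mapSnd K p :=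
    funext fun q => Finset.sum_congr rfl fun a _ => mul_comm _ _
  rw [CMI, MI_swapLast, MI_compProd hp hK, hmarg]

/-- Exact recoverability forces equality in the data-processing inequality `I(W:B) ≤ I(W:A)`, so
that `W – B – A` is a Markov chain as well. -/
lemma CMI_swapLast_compProd_eq_zero_of_recovery {p : W × A → ℝ} {R : A → B → ℝ}
    {Rhat : B → A → ℝ} (hp : 0 ≤ p) (hR : IsChannel R) (hRhat : IsChannel Rhat)
    (hrec : mapSnd Rhat (mapSnd R p) = p) :
    CMI (swapLast (compProd p R)) = 0 := by
  have hforward := CMI_nonneg (swapLast_nonneg (compProd_nonneg hp hR))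
  have hbackward := CMI_nonneg (swapLast_nonneg (compProd_nonneg (mapSnd_nonneg hR hp) hRhat))
  rw [CMI_swapLast_compProd hp hR] at hforward ⊢
  rw [CMI_swapLast_compProd (mapSnd_nonneg hR hp) hRhat, hrec] at hbackward
  linarith

end Channels

/-- if `I(C1:C2|A)_P = 0` and the action of the channel `R` on
the `A`-component of `P` can be undone exactly by a recovery channel `R̂`,
then `I(C1:C2|A')_{R(P)} = 0`. -/
theorem stmt_12 {C1 C2 A A' : Type*} [Fintype C1] [Fintype C2] [Fintype A] [Fintype A']
    (P : C1 × C2 × A → ℝ) (hP : IsDist P)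
    (hMarkov : CMI (fun q : C1 × A × C2 => P (q.1, q.2.2, q.2.1)) = 0)
    (R : A → A' → ℝ) (hR : IsChannel R)
    (Rhat : A' → A → ℝ) (hRhat : IsChannel Rhat)
    (hrec : ∀ c1 c2 a,
      ∑ a' : A', Rhat a' a * (∑ a₀ : A, R a₀ a' * P (c1, c2, a₀)) = P (c1, c2, a)) :
    CMI (fun q : C1 × A' × C2 => ∑ a : A, R a q.2.1 * P (q.1, q.2.2, a)) = 0 := by
  set PW : (C1 × C2) × A → ℝ := fun q => P (q.1.1, q.1.2, q.2)
  have hPW : 0 ≤ PW := fun _ => hP.1 _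
  have hcond := (CMI_eq_zero_iff (swapLast_nonneg (compProd_nonneg hPW hR))).1
    (CMI_swapLast_compProd_eq_zero_of_recovery hPW hR hRhat (funext fun q => hrec q.1.1 q.1.2 q.2))
  have hind := (CMI_eq_zero_iff (swapLast_nonneg hP.1)).1 hMarkov
  have hQ : 0 ≤ fun q : C1 × A' × C2 => ∑ a : A, R a q.2.1 * P (q.1, q.2.2, a) :=
    fun _ => Finset.sum_nonneg fun _ _ => mul_nonneg (hR.1 _ _) (hP.1 _)
  refine (CMI_eq_zero_iff hQ).2 fun a' => ?_
  exact IsIndep.sum_mul (g := fun a w => P (w.1, w.2, a)) (w := fun a => R a a')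
    (fun a _ => hP.1 _) (fun a => hR.1 a a') hind (hcond a')
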